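/- Let 0 < a, 0 < b and a + b < 1, and set τ = 1 − a − b and ā = 1 − a, b̄ = 1 − b. Then (1/τ²)·∫_a^{b̄} ∫_a^{b̄} (min{u, v} − u·v) / (φ(Φ⁻¹(v))·φ(Φ⁻¹(u))) dv du = (1/τ²)·[ a·ā·(Φ⁻¹(a))² + b·b̄·(Φ⁻¹(b̄))² − 2·a·b·Φ⁻¹(a)·Φ⁻¹(b̄) − 2·τ·c₁·(a·Φ⁻¹(a) + b·Φ⁻¹(b̄)) − τ²·c₁² + τ·c₂ ]. -/

import Mathlib

open Real MeasureTheory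

/-- Standard normal density `φ(x) = (2π)^(−1/2) exp(−x²/2)`. -/
noncomputable def stdPDF (x : ℝ) : ℝ := (Real.sqrt (2 * Real.pi))⁻¹ * Real.exp (-x ^ 2 / 2)

/-- Standard normal cumulative distribution function `Φ(x) = ∫_{−∞}^x φ(u) du`. -/
noncomputable def stdCDF (x : ℝ) : ℝ := ∫ u in Set.Iic x, stdPDF u

/-- Mills hazard `h(γ) = φ(γ)/(1 − Φ(γ))`. -/
noncomputable def millsHazard (γ : ℝ) : ℝ := stdPDF γ / (1 - stdCDF γ)

/-- The standard normal quantile function `Φ⁻¹`, the inverse of `Φ`. -/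
noncomputable def stdQuantile : ℝ → ℝ := Function.invFun stdCDF

/-- Trimmed standard normal quantile moment
`c_k = (1/(1 − a − b)) ∫_a^{1−b} (Φ⁻¹(s))^k ds`. -/
noncomputable def trimMoment (a b : ℝ) (k : ℕ) : ℝ :=
  (1 - a - b)⁻¹ * ∫ s in a..(1 - b), (stdQuantile s) ^ k

/-!
Substituting `u = Φ x`, `v = Φ y` (so `du = φ x dx`) turns the left-hand side into
`∫∫_{[α, β]²} (Φ (min x y) - Φ x Φ y) dx dy` with `α = Φ⁻¹ a`, `β = Φ⁻¹ (1 - b)`. Every integral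
in sight then has an elementary antiderivative in terms of `Φ` and `φ`
(`∫ Φ = x Φ + φ`, `∫ x φ = -φ`, `∫ x² φ = Φ - x φ`), and both sides become the same polynomial
in `α, β, a, b, φ α, φ β`.
-/

open Set Filter intervalIntegral ProbabilityTheory

lemma stdPDF_eq_gaussianPDFReal : stdPDF = gaussianPDFReal 0 1 := by
  ext x; simp [stdPDF, gaussianPDFReal]

@[fun_prop]
lemma continuous_stdPDF : Continuous stdPDF := by
  unfold stdPDF; fun_prop

lemma stdPDF_pos (x : ℝ) : 0 < stdPDF x := by
  rw [stdPDF_eq_gaussianPDFReal]; exact gaussianPDFReal_pos _ _ _ one_ne_zero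

lemma integrable_stdPDF : Integrable stdPDF := by
  rw [stdPDF_eq_gaussianPDFReal]; exact integrable_gaussianPDFReal _ _

lemma hasDerivAt_stdPDF (x : ℝ) : HasDerivAt stdPDF (-x * stdPDF x) x := by
  have h : HasDerivAt (fun y : ℝ => -y ^ 2 / 2) (-x) x :=
    ((hasDerivAt_pow 2 x).neg.div_const 2).congr_deriv (by norm_num; ring)
  exact (h.exp.const_mul (√(2 * π))⁻¹).congr_deriv (by simp only [stdPDF]; ring)

lemma stdCDF_eq_cdf : stdCDF = cdf (gaussianReal 0 1) := by
  ext x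
  rw [cdf_eq_real, measureReal_def, gaussianReal_apply_eq_integral _ one_ne_zero,
    ENNReal.toReal_ofReal
      (setIntegral_nonneg measurableSet_Iic fun y _ => gaussianPDFReal_nonneg _ _ _),
    stdCDF, stdPDF_eq_gaussianPDFReal]

lemma stdCDF_sub_stdCDF (x y : ℝ) : stdCDF y - stdCDF x = ∫ t in x..y, stdPDF t :=
  integral_Iic_sub_Iic integrable_stdPDF.integrableOn integrable_stdPDF.integrableOn

lemma hasDerivAt_stdCDF (x : ℝ) : HasDerivAt stdCDF (stdPDF x) x := by
  have h : HasDerivAt (fun y => stdCDF 0 + ∫ t in (0:ℝ)..y, stdPDF t) (stdPDF x) x :=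
    (integral_hasDerivAt_right (continuous_stdPDF.intervalIntegrable _ _)
      (continuous_stdPDF.stronglyMeasurableAtFilter _ _) continuous_stdPDF.continuousAt).const_add _
  refine h.congr_of_eventuallyEq (Eventually.of_forall fun y => ?_)
  simp only [← stdCDF_sub_stdCDF, add_sub_cancel]

@[fun_prop]
lemma continuous_stdCDF : Continuous stdCDF :=
  continuous_iff_continuousAt.2 fun x => (hasDerivAt_stdCDF x).continuousAt

lemma strictMono_stdCDF : StrictMono stdCDF := fun x y hxy => by
  have hpos := intervalIntegral_pos_of_pos (continuous_stdPDF.intervalIntegrable x y) stdPDF_pos hxy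
  linarith [stdCDF_sub_stdCDF x y]

lemma range_stdCDF : range stdCDF = Ioo 0 1 := by
  refine Subset.antisymm ?_ fun p hp => ?_
  · rintro _ ⟨x, rfl⟩
    have h₀ : 0 ≤ stdCDF (x - 1) := stdCDF_eq_cdf ▸ cdf_nonneg _ _
    have h₁ : stdCDF (x + 1) ≤ 1 := stdCDF_eq_cdf ▸ cdf_le_one _ _
    exact ⟨h₀.trans_lt (strictMono_stdCDF (sub_one_lt x)),
      (strictMono_stdCDF (lt_add_one x)).trans_le h₁⟩
  · have hcont := continuous_stdCDF
    rw [stdCDF_eq_cdf] at hcont ⊢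
    exact mem_range_of_exists_le_of_exists_ge hcont
      ((tendsto_cdf_atBot _).eventually (eventually_le_nhds hp.1)).exists
      ((tendsto_cdf_atTop _).eventually (eventually_ge_nhds hp.2)).exists

lemma stdCDF_mem_Ioo (x : ℝ) : stdCDF x ∈ Ioo 0 1 :=
  range_stdCDF ▸ mem_range_self x

lemma stdQuantile_stdCDF (x : ℝ) : stdQuantile (stdCDF x) = x :=
  Function.leftInverse_invFun strictMono_stdCDF.injective x

lemma stdCDF_stdQuantile {p : ℝ} (hp : p ∈ Ioo 0 1) : stdCDF (stdQuantile p) = p :=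
  Function.invFun_eq (range_stdCDF ▸ hp : p ∈ range stdCDF)

lemma continuousOn_stdQuantile : ContinuousOn stdQuantile (Ioo 0 1) := by
  rw [continuousOn_iff_continuous_domRestrict]
  refine Monotone.continuous_of_surjective (fun p q hpq => ?_)
    fun x => ⟨⟨stdCDF x, stdCDF_mem_Ioo x⟩, stdQuantile_stdCDF x⟩
  rw [domRestrict_apply, domRestrict_apply, ← strictMono_stdCDF.le_iff_le,
    stdCDF_stdQuantile p.2, stdCDF_stdQuantile q.2]
  exact hpq

lemma integral_comp_stdCDF_mul_stdPDF {g : ℝ → ℝ} (hg : ContinuousOn g (Ioo 0 1)) (c d : ℝ) :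
    ∫ x in c..d, g (stdCDF x) * stdPDF x = ∫ u in stdCDF c..stdCDF d, g u :=
  integral_comp_mul_deriv' (fun x _ => hasDerivAt_stdCDF x) continuous_stdPDF.continuousOn
    (hg.mono (image_subset_iff.2 fun x _ => stdCDF_mem_Ioo x))

lemma integral_div_stdPDF_stdQuantile {f : ℝ → ℝ} (hf : ContinuousOn f (Ioo 0 1)) (c d : ℝ) :
    ∫ u in stdCDF c..stdCDF d, f u / stdPDF (stdQuantile u) = ∫ x in c..d, f (stdCDF x) := by
  have hg : ContinuousOn (fun u => f u / stdPDF (stdQuantile u)) (Ioo 0 1) :=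
    hf.div (continuous_stdPDF.comp_continuousOn continuousOn_stdQuantile)
      fun u _ => (stdPDF_pos _).ne'
  rw [← integral_comp_stdCDF_mul_stdPDF hg]
  refine integral_congr fun x _ => ?_
  simp only [stdQuantile_stdCDF, div_mul_cancel₀ _ (stdPDF_pos x).ne']

lemma integral_stdQuantile_pow (k : ℕ) (c d : ℝ) :
    ∫ u in stdCDF c..stdCDF d, stdQuantile u ^ k = ∫ x in c..d, x ^ k * stdPDF x := by
  rw [← integral_comp_stdCDF_mul_stdPDF (g := fun u => stdQuantile u ^ k)
    (continuousOn_stdQuantile.pow k)]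
  simp only [stdQuantile_stdCDF]

lemma integral_mul_stdPDF (c d : ℝ) : ∫ x in c..d, x * stdPDF x = stdPDF c - stdPDF d := by
  rw [integral_eq_sub_of_hasDerivAt (f := fun x => -stdPDF x) (f' := fun x => x * stdPDF x)
    (fun x _ => (hasDerivAt_stdPDF x).neg.congr_deriv (by ring))
    ((continuous_id.mul continuous_stdPDF).intervalIntegrable _ _)]
  ring

lemma integral_sq_mul_stdPDF (c d : ℝ) :
    ∫ x in c..d, x ^ 2 * stdPDF x = stdCDF d - stdCDF c - (d * stdPDF d - c * stdPDF c) := by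
  rw [integral_eq_sub_of_hasDerivAt (f := fun x => stdCDF x - x * stdPDF x)
    (f' := fun x => x ^ 2 * stdPDF x)
    (fun x _ => ((hasDerivAt_stdCDF x).sub ((hasDerivAt_id x).mul (hasDerivAt_stdPDF x)))
      |>.congr_deriv (by simp only [id]; ring))
    (((continuous_pow 2).mul continuous_stdPDF).intervalIntegrable _ _)]
  ring

lemma integral_stdCDF (c d : ℝ) :
    ∫ x in c..d, stdCDF x = d * stdCDF d + stdPDF d - (c * stdCDF c + stdPDF c) := by
  rw [integral_eq_sub_of_hasDerivAt (f := fun x => x * stdCDF x + stdPDF x)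
    (fun x _ => (((hasDerivAt_id x).mul (hasDerivAt_stdCDF x)).add (hasDerivAt_stdPDF x))
      |>.congr_deriv (by simp only [id]; ring))
    (continuous_stdCDF.intervalIntegrable _ _)]

lemma Monotone.integral_min {g : ℝ → ℝ} (hg : Monotone g) {c d x : ℝ} (hx : x ∈ Icc c d) :
    ∫ y in c..d, min (g x) (g y) = (∫ y in c..x, g y) + (d - x) * g x := by
  have hmin : Monotone fun y => min (g x) (g y) := fun y z hyz => min_le_min_left _ (hg hyz)
  rw [← integral_add_adjacent_intervals (b := x) hmin.intervalIntegrable hmin.intervalIntegrable]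
  congr 1
  · refine integral_congr fun y hy => min_eq_right (hg ?_)
    rw [uIcc_of_le hx.1] at hy; exact hy.2
  · rw [← smul_eq_mul, ← intervalIntegral.integral_const]
    refine integral_congr fun y hy => min_eq_left (hg ?_)
    rw [uIcc_of_le hx.2] at hy; exact hy.1

lemma integral_integral_div_stdPDF_stdQuantile {f : ℝ → ℝ → ℝ} (hf : Continuous f.uncurry)
    (c d : ℝ) :
    ∫ u in stdCDF c..stdCDF d, ∫ v in stdCDF c..stdCDF d,
        f u v / (stdPDF (stdQuantile v) * stdPDF (stdQuantile u)) =
      ∫ x in c..d, ∫ y in c..d, f (stdCDF x) (stdCDF y) := by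
  have hinner (u : ℝ) : ∫ v in stdCDF c..stdCDF d,
      f u v / (stdPDF (stdQuantile v) * stdPDF (stdQuantile u)) =
        (∫ y in c..d, f u (stdCDF y)) / stdPDF (stdQuantile u) := by
    simp only [← div_div]
    rw [intervalIntegral.integral_div,
      integral_div_stdPDF_stdQuantile (hf.uncurry_left u).continuousOn]
  simp only [hinner]
  exact integral_div_stdPDF_stdQuantile (continuous_parametric_intervalIntegral_of_continuous'
    (f := fun u y => f u (stdCDF y)) (hf.comp (continuous_id.prodMap continuous_stdCDF)) c d
    ).continuousOn c d

lemma integral_min_stdCDF_sub_mul {c d x : ℝ} (hx : x ∈ Icc c d) :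
    ∫ y in c..d, (min (stdCDF x) (stdCDF y) - stdCDF x * stdCDF y) =
      stdPDF x + (d - ∫ y in c..d, stdCDF y) * stdCDF x - (c * stdCDF c + stdPDF c) := by
  rw [integral_sub (g := fun y => stdCDF x * stdCDF y)
      ((continuous_const.min continuous_stdCDF).intervalIntegrable _ _)
      ((continuous_const.mul continuous_stdCDF).intervalIntegrable _ _),
    intervalIntegral.integral_const_mul, strictMono_stdCDF.monotone.integral_min hx,
    integral_stdCDF c x]
  ring

lemma integral_integral_min_stdCDF_sub_mul {c d : ℝ} (hcd : c ≤ d) :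
    ∫ x in c..d, ∫ y in c..d, (min (stdCDF x) (stdCDF y) - stdCDF x * stdCDF y) =
      stdCDF d - stdCDF c + (d - ∫ y in c..d, stdCDF y) * (∫ y in c..d, stdCDF y)
        - (c * stdCDF c + stdPDF c) * (d - c) := by
  rw [integral_congr fun x hx => integral_min_stdCDF_sub_mul (uIcc_of_le hcd ▸ hx),
    intervalIntegral.integral_sub (Continuous.intervalIntegrable (by fun_prop) _ _)
      intervalIntegrable_const,
    intervalIntegral.integral_add (continuous_stdPDF.intervalIntegrable _ _)
      (Continuous.intervalIntegrable (by fun_prop) _ _),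
    intervalIntegral.integral_const_mul, intervalIntegral.integral_const, smul_eq_mul,
    ← stdCDF_sub_stdCDF]
  ring

/-- The double-integral expression for the first variance-covariance constant `c₁*`. -/
theorem cStar_one_formula (a b : ℝ) (ha : 0 < a) (hb : 0 < b) (hab : a + b < 1) :
    (1 - a - b)⁻¹ ^ 2 *
      ∫ u in a..(1 - b), ∫ v in a..(1 - b),
        (min u v - u * v) / (stdPDF (stdQuantile v) * stdPDF (stdQuantile u)) =
    (1 - a - b)⁻¹ ^ 2 *
      (a * (1 - a) * (stdQuantile a) ^ 2 + b * (1 - b) * (stdQuantile (1 - b)) ^ 2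
        - 2 * a * b * stdQuantile a * stdQuantile (1 - b)
        - 2 * (1 - a - b) * trimMoment a b 1 *
            (a * stdQuantile a + b * stdQuantile (1 - b))
        - (1 - a - b) ^ 2 * (trimMoment a b 1) ^ 2
        + (1 - a - b) * trimMoment a b 2) := by
  set α := stdQuantile a
  set β := stdQuantile (1 - b)
  have hα : stdCDF α = a := stdCDF_stdQuantile ⟨ha, by linarith⟩
  have hβ : stdCDF β = 1 - b := stdCDF_stdQuantile ⟨by linarith, by linarith⟩
  have hαβ : α ≤ β := strictMono_stdCDF.le_iff_le.1 (by linarith)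
  have hmoment (k : ℕ) : (1 - a - b) * trimMoment a b k = ∫ x in α..β, x ^ k * stdPDF x := by
    rw [trimMoment, ← mul_assoc, mul_inv_cancel₀ (by linarith : 0 < 1 - a - b).ne', one_mul,
      ← hα, ← hβ, integral_stdQuantile_pow]
  have hlhs := integral_integral_div_stdPDF_stdQuantile
    (f := fun u v => min u v - u * v) (by fun_prop) α β
  rw [integral_integral_min_stdCDF_sub_mul hαβ, integral_stdCDF, hα, hβ] at hlhs
  have hc₁ : (1 - a - b) * trimMoment a b 1 = stdPDF α - stdPDF β := by
    simp only [hmoment, pow_one, integral_mul_stdPDF]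
  have hc₂ : (1 - a - b) * trimMoment a b 2 = 1 - b - a - (β * stdPDF β - α * stdPDF α) := by
    rw [hmoment, integral_sq_mul_stdPDF, hα, hβ]
  rw [hlhs]
  congr 1
  linear_combination
    (2 * (a * α + b * β) + stdPDF α - stdPDF β + (1 - a - b) * trimMoment a b 1) * hc₁ - hc₂
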